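/- arXiv:2211.14527 — 3 statements merged into one kernel-verified Lean document; each statement's English description precedes it below -/
import Mathlib

section
/- For every p ∈ [0,2] and α ∈ [0,1/2], the function r₁(p) = (p²(1-α)²(1-2α)(144 − 36p² + p⁴α(3 − 8α + 4α²)))/1152 satisfies r₁(p) ≤ 4(1-α)²/9. -/
/-- For `p ∈ [0,2]` and `α ∈ [0,1/2]`,
`r₁(p) = p²(1-α)²(1-2α)(144 − 36p² + p⁴α(3−8α+4α²))/1152 ≤ 4(1-α)²/9`. -/
theorem r1_bound (α p : ℝ) (hα0 : 0 ≤ α) (hα1 : α ≤ 1 / 2)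
    (hp0 : 0 ≤ p) (hp2 : p ≤ 2) :
    p ^ 2 * (1 - α) ^ 2 * (1 - 2 * α) *
        (144 - 36 * p ^ 2 + p ^ 4 * α * (3 - 8 * α + 4 * α ^ 2)) / 1152 ≤
      4 * (1 - α) ^ 2 / 9 := by
  have ha : (0:ℝ) ≤ 1 - 2 * α := by linarith
  have h1 : p ^ 2 * (1 - 2 * α) * (144 - 36 * p ^ 2) ≤ 144 := by
    nlinarith [mul_nonneg ha (sq_nonneg (p ^ 2 - 2)), sq_nonneg (p ^ 2 - 2)]
  have hp6 : p ^ 6 ≤ 64 := by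
    calc p ^ 6 ≤ 2 ^ 6 := pow_le_pow_left₀ hp0 hp2 6
    _ = 64 := by norm_num
  have hαb : α * (1 - 2 * α) ^ 2 * (3 - 2 * α) ≤ 2 / 9 := by
    nlinarith [mul_nonneg (sq_nonneg (6 * α - 1)) (by linarith : (0:ℝ) ≤ 2 - 3 * α),
      mul_nonneg hα0 (sq_nonneg (1 - 2 * α))]
  have hαnn : 0 ≤ α * (1 - 2 * α) ^ 2 * (3 - 2 * α) :=
    mul_nonneg (mul_nonneg hα0 (sq_nonneg _)) (by linarith)
  have hp6n : 0 ≤ p ^ 6 := by positivity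
  have hB : p ^ 6 * (α * (1 - 2 * α) ^ 2 * (3 - 2 * α)) ≤ 64 * (2 / 9) :=
    mul_le_mul hp6 hαb hαnn (by norm_num)
  have key : p ^ 2 * (1 - 2 * α) *
      (144 - 36 * p ^ 2 + p ^ 4 * α * (3 - 8 * α + 4 * α ^ 2)) ≤ 512 := by
    nlinarith [h1, hB]
  nlinarith [mul_le_mul_of_nonneg_left key (sq_nonneg (1 - α))]
end

section
/- For every p ∈ [0,2] and every α ∈ [0,1), the function r₂(p) = ((1-α)²/1152)(32(4−p²)² + α(1−2α)²(3−2α)p⁶ + 4p³(4−p²)(3−10α+8α²)) satisfies r₂(p) ≤ 4(1-α)²/9, with equality at p = 0. -/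
/-- For `p ∈ [0,2]` and `α ∈ [0,1)`, the function
`r₂(p) = ((1-α)²/1152)(32(4−p²)² + α(1−2α)²(3−2α)p⁶ + 4p³(4−p²)(3−10α+8α²))`
satisfies `r₂(p) ≤ 4(1-α)²/9`, with equality at `p = 0`. -/
theorem r2_bound (α : ℝ) (hα0 : 0 ≤ α) (hα1 : α < 1) :
    (∀ p ∈ Set.Icc (0 : ℝ) 2,
      ((1 - α) ^ 2 / 1152) *
          (32 * (4 - p ^ 2) ^ 2 + α * (1 - 2 * α) ^ 2 * (3 - 2 * α) * p ^ 6 +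
            4 * p ^ 3 * (4 - p ^ 2) * (3 - 10 * α + 8 * α ^ 2)) ≤
        4 * (1 - α) ^ 2 / 9) ∧
    ((1 - α) ^ 2 / 1152) *
        (32 * (4 - (0 : ℝ) ^ 2) ^ 2 + α * (1 - 2 * α) ^ 2 * (3 - 2 * α) * (0 : ℝ) ^ 6 +
          4 * (0 : ℝ) ^ 3 * (4 - (0 : ℝ) ^ 2) * (3 - 10 * α + 8 * α ^ 2)) =
      4 * (1 - α) ^ 2 / 9 := by
  constructor
  · rintro p ⟨hp0, hp2⟩
    have hsq : (0:ℝ) ≤ (1 - α) ^ 2 := sq_nonneg _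
    have key : 32 * (4 - p ^ 2) ^ 2 + α * (1 - 2 * α) ^ 2 * (3 - 2 * α) * p ^ 6 +
        4 * p ^ 3 * (4 - p ^ 2) * (3 - 10 * α + 8 * α ^ 2) ≤ 512 := by
      have h1 : 0 ≤ 2 - p := by linarith
      have h2 : 0 ≤ 1 - α := by linarith
      nlinarith [sq_nonneg p, sq_nonneg (p*α), mul_nonneg hp0 hα0, sq_nonneg (1-2*α),
        mul_nonneg (mul_nonneg hp0 hp0) h1, mul_nonneg h1 h2, mul_nonneg hp0 h2,
        mul_nonneg (mul_nonneg hα0 hp0) h1, sq_nonneg (p^2*(1-2*α)),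
        mul_nonneg (mul_nonneg (mul_nonneg hp0 hp0) hp0) hα0,
        mul_nonneg (mul_nonneg h1 h1) hα0, sq_nonneg (p-1), sq_nonneg (α - 1/2)]
    calc ((1 - α) ^ 2 / 1152) *
          (32 * (4 - p ^ 2) ^ 2 + α * (1 - 2 * α) ^ 2 * (3 - 2 * α) * p ^ 6 +
            4 * p ^ 3 * (4 - p ^ 2) * (3 - 10 * α + 8 * α ^ 2))
        ≤ ((1 - α) ^ 2 / 1152) * 512 := by
          apply mul_le_mul_of_nonneg_left key (by positivity)
      _ = 4 * (1 - α) ^ 2 / 9 := by ring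
  · norm_num
    ring
end

section
/- For the function φ(z) = 1 + z − z³/3, the minimum of Re φ(z) over |z| = r equals 1 − r + r³/3 when r ≤ 1/√3, and the limit as r → 1⁻ of min_{|z|=r} Re φ(z) equals 1 − (2√2)/3, where min_{|z|=r} Re φ(z) = 1 − (1/3)(1+r²)^{3/2} for r ≥ 1/√3. -/
/-!
On the circle `‖z‖ = r`, writing `x = Re z`, one has `Re z³ = x³ - 3x(r² - x²)`, so
`Re φ(z) = 1 + (1 + r²)x - (4/3)x³` is a cubic in `x ∈ [-r, r]`. Its local minimum is at
`x = -c` with `4c² = 1 + r²`, and `Re φ - (1 - 8c³/3) = (4/3)(x + c)²(2c - x) ≥ 0` since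
`x ≤ r < 2c`. For `3r² ≥ 1` the point `-c` lies in `[-r, r]`, giving the minimum
`1 - (1 + r²)^{3/2}/3`; for `3r² ≤ 1` the cubic is increasing on `[-r, r]`, so the minimum
is at `x = -r`.
-/

open Complex Set Filter Topology

/-- `Re φ(z)` for `‖z‖ = r`, as a function of `x = Re z`. -/
noncomputable def nephroidProfile (r x : ℝ) : ℝ := 1 + x * (1 + r ^ 2) - 4 / 3 * x ^ 3

lemma re_nephroid_eq_nephroidProfile (z : ℂ) :
    (1 + z - z ^ 3 / 3).re = nephroidProfile ‖z‖ z.re := by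
  have him := sq_norm_sub_sq_re z
  simp only [nephroidProfile, add_re, sub_re, one_re, pow_succ, pow_zero, one_mul, mul_re,
    mul_im, div_ofNat_re]
  linear_combination (-z.re) * him

lemma exists_norm_eq_re_eq {r x : ℝ} (h : |x| ≤ r) : ∃ z : ℂ, ‖z‖ = r ∧ z.re = x := by
  have hr : 0 ≤ r := (abs_nonneg x).trans h
  have hx : 0 ≤ r ^ 2 - x ^ 2 := by nlinarith [sq_abs x, abs_nonneg x]
  refine ⟨⟨x, √(r ^ 2 - x ^ 2)⟩, ?_, rfl⟩
  rw [norm_def, normSq_mk, ← sq, ← sq, Real.sq_sqrt hx, add_sub_cancel, Real.sqrt_sq hr]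

lemma nephroid_re_sphere_eq_image (r : ℝ) :
    {v : ℝ | ∃ z : ℂ, ‖z‖ = r ∧ v = (1 + z - z ^ 3 / 3).re} =
      nephroidProfile r '' Icc (-r) r := by
  ext v
  simp only [mem_image, mem_Icc, ← abs_le]
  constructor
  · rintro ⟨z, rfl, rfl⟩
    exact ⟨z.re, abs_re_le_norm z, (re_nephroid_eq_nephroidProfile z).symm⟩
  · rintro ⟨x, hx, rfl⟩
    obtain ⟨z, rfl, rfl⟩ := exists_norm_eq_re_eq hx
    exact ⟨z, rfl, (re_nephroid_eq_nephroidProfile z).symm⟩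

lemma nephroidProfile_neg_self_le {r x : ℝ} (hr : 3 * r ^ 2 ≤ 1) (hx : x ∈ Icc (-r) r) :
    nephroidProfile r (-r) ≤ nephroidProfile r x := by
  obtain ⟨hlo, hhi⟩ := hx
  have hquad : x ^ 2 - x * r + r ^ 2 ≤ 3 * r ^ 2 := by nlinarith
  have hfactor : nephroidProfile r x - nephroidProfile r (-r) =
      (x + r) * ((1 + r ^ 2) - 4 / 3 * (x ^ 2 - x * r + r ^ 2)) := by
    unfold nephroidProfile; ring
  nlinarith [mul_nonneg (neg_le_iff_add_nonneg.1 hlo)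
    (by linarith : 0 ≤ (1 + r ^ 2) - 4 / 3 * (x ^ 2 - x * r + r ^ 2))]

lemma nephroidProfile_neg_le {r c x : ℝ} (hc : 4 * c ^ 2 = 1 + r ^ 2) (hx : x ≤ 2 * c) :
    nephroidProfile r (-c) ≤ nephroidProfile r x := by
  have hfactor : nephroidProfile r x - nephroidProfile r (-c) =
      4 / 3 * (x + c) ^ 2 * (2 * c - x) := by
    unfold nephroidProfile; linear_combination (-x - c) * hc
  nlinarith [mul_nonneg (sq_nonneg (x + c)) (sub_nonneg.2 hx)]

lemma nephroidProfile_neg_half_sqrt (r : ℝ) :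
    nephroidProfile r (-(√(1 + r ^ 2) / 2)) = 1 - 1 / 3 * (1 + r ^ 2) ^ ((3 : ℝ) / 2) := by
  have hs := Real.sq_sqrt (by positivity : (0 : ℝ) ≤ 1 + r ^ 2)
  rw [Real.rpow_div_two_eq_sqrt _ (by positivity), Real.rpow_ofNat, nephroidProfile]
  linear_combination √(1 + r ^ 2) / 2 * hs

lemma two_rpow_three_halves : (2 : ℝ) ^ ((3 : ℝ) / 2) = 2 * √2 := by
  rw [Real.rpow_div_two_eq_sqrt _ zero_le_two, Real.rpow_ofNat, pow_succ,
    Real.sq_sqrt zero_le_two]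

/-- For `φ(z) = 1 + z − z³/3`: the minimum of `Re φ(z)` over `|z| = r` equals
`1 − r + r³/3` for `0 < r ≤ 1/√3`, equals `1 − (1/3)(1+r²)^{3/2}` for
`1/√3 ≤ r < 1`, and the latter tends to `1 − 2√2/3` as `r → 1⁻`. -/
theorem nephroid_min_re :
    (∀ r : ℝ, 0 < r → r ≤ 1 / Real.sqrt 3 →
      IsLeast {x : ℝ | ∃ z : ℂ, ‖z‖ = r ∧ x = (1 + z - z ^ 3 / 3).re}
        (1 - r + r ^ 3 / 3)) ∧
    (∀ r : ℝ, 1 / Real.sqrt 3 ≤ r → r < 1 →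
      IsLeast {x : ℝ | ∃ z : ℂ, ‖z‖ = r ∧ x = (1 + z - z ^ 3 / 3).re}
        (1 - (1 / 3) * (1 + r ^ 2) ^ ((3 : ℝ) / 2))) ∧
    Filter.Tendsto (fun r : ℝ => 1 - (1 / 3) * (1 + r ^ 2) ^ ((3 : ℝ) / 2))
      (nhdsWithin 1 (Set.Iio 1)) (nhds (1 - 2 * Real.sqrt 2 / 3)) := by
  have hs3 : (0 : ℝ) < √3 := by positivity
  have hs3sq : √3 ^ 2 = 3 := Real.sq_sqrt zero_le_three
  refine ⟨fun r hr hr3 => ?_, fun r hr3 _ => ?_, ?_⟩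
  · have hsmall : 3 * r ^ 2 ≤ 1 := by
      rw [le_div_iff₀ hs3] at hr3; nlinarith
    rw [nephroid_re_sphere_eq_image, show 1 - r + r ^ 3 / 3 = nephroidProfile r (-r) by
      unfold nephroidProfile; ring]
    exact ⟨mem_image_of_mem _ ⟨le_rfl, by linarith⟩,
      forall_mem_image.2 fun x hx => nephroidProfile_neg_self_le hsmall hx⟩
  · have hr : 0 ≤ r := (by positivity : (0 : ℝ) ≤ 1 / √3).trans hr3
    have hlarge : 1 ≤ 3 * r ^ 2 := by
      rw [div_le_iff₀ hs3] at hr3; nlinarith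
    set c := √(1 + r ^ 2) / 2
    have hc : 4 * c ^ 2 = 1 + r ^ 2 := by
      rw [div_pow, Real.sq_sqrt (by positivity)]; ring
    have hc0 : 0 ≤ c := by positivity
    have hcr : c ≤ r := by nlinarith
    rw [nephroid_re_sphere_eq_image, ← nephroidProfile_neg_half_sqrt]
    change IsLeast _ (nephroidProfile r (-c))
    exact ⟨mem_image_of_mem _ ⟨neg_le_neg hcr, by linarith⟩,
      forall_mem_image.2 fun x hx => nephroidProfile_neg_le hc (by nlinarith [hx.2])⟩
  · have hcont : Continuous fun r : ℝ => 1 - (1 / 3) * (1 + r ^ 2) ^ ((3 : ℝ) / 2) :=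
      continuous_const.sub (continuous_const.mul
        ((by fun_prop : Continuous fun r : ℝ => 1 + r ^ 2).rpow_const fun _ => Or.inr
          (by norm_num)))
    have hval : 1 - (1 / 3) * (1 + (1 : ℝ) ^ 2) ^ ((3 : ℝ) / 2) = 1 - 2 * √2 / 3 := by
      rw [one_pow, one_add_one_eq_two, two_rpow_three_halves]; ring
    exact hval ▸ (hcont.tendsto 1).mono_left nhdsWithin_le_nhds
end
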